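/- arXiv:2503.07350 — 4 statements merged into one kernel-verified Lean document; each statement's English description precedes it below -/
import Mathlib

section
/- Let E : [0, ∞) → [0, ∞) be a continuous nonincreasing function and q ≥ 1, and suppose there exist constants C > 0 and t₀ ≥ 0 such that ∫_{t₀}^{τ} E(t)^{(q+1)/2} dt ≤ C·E(0) for all τ > t₀. Then there exists a constant C' > 0 such that E(t) ≤ C'·E(0)·(1+t)^{−2/(q+1)} for all t ≥ 0. -/
open Real Set intervalIntegral

theorem stmt7 (E : ℝ → ℝ) (q C t₀ : ℝ)
    (hEcont : Continuous E) (hEanti : AntitoneOn E (Set.Ici 0))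
    (hEnonneg : ∀ t ≥ (0 : ℝ), 0 ≤ E t)
    (hq : 1 ≤ q) (hC : 0 < C) (ht₀ : 0 ≤ t₀)
    (hint : ∀ τ > t₀, (∫ t in t₀..τ, E t ^ ((q + 1) / 2)) ≤ C * E 0) :
    ∃ C' > 0, ∀ t ≥ (0 : ℝ), E t ≤ C' * E 0 * (1 + t) ^ (-(2 / (q + 1))) := by
  set α : ℝ := (q + 1) / 2 with hα
  set β : ℝ := 2 / (q + 1) with hβ
  have hαpos : 0 < α := by positivity
  have hβpos : 0 < β := by positivity
  have hβα : β = 1 / α := by rw [hβ, hα, one_div_div]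
  have hE0 : 0 ≤ E 0 := hEnonneg 0 le_rfl
  rcases eq_or_lt_of_le hE0 with h0 | h0
  · -- E 0 = 0 case
    refine ⟨1, one_pos, fun t ht => ?_⟩
    calc E t ≤ E 0 := hEanti self_mem_Ici ht ht
    _ = 0 := h0.symm
    _ ≤ 1 * E 0 * (1 + t) ^ (-β) := by rw [← h0]; positivity
  · -- E 0 > 0 case
    set K : ℝ := C * E 0 * (2 + t₀) with hK
    have hKpos : 0 < K := by positivity
    refine ⟨max ((2 + t₀) ^ β) (K ^ β / E 0), lt_max_of_lt_left (by positivity), fun t ht => ?_⟩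
    set C' : ℝ := max ((2 + t₀) ^ β) (K ^ β / E 0) with hC'
    have h1t : (0:ℝ) < 1 + t := by linarith
    rcases le_or_gt t (1 + t₀) with hcase | hcase
    · -- small t
      have h1 : E t ≤ E 0 := hEanti self_mem_Ici ht ht
      have h2 : (1 + t) ^ β ≤ (2 + t₀) ^ β :=
        Real.rpow_le_rpow h1t.le (by linarith) hβpos.le
      have h3 : (2 + t₀) ^ β ≤ C' := le_max_left _ _
      have h4 : (1 + t) ^ β * (1 + t) ^ (-β) = 1 := by
        rw [← Real.rpow_add h1t]; simp
      have h5 : (0:ℝ) < (1 + t) ^ (-β) := Real.rpow_pos_of_pos h1t _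
      calc E t ≤ E 0 := h1
      _ = ((1 + t) ^ β * E 0) * (1 + t) ^ (-β) := by
            rw [mul_comm ((1+t)^β) (E 0), mul_assoc, h4, mul_one]
      _ ≤ C' * E 0 * (1 + t) ^ (-β) := by
            apply mul_le_mul_of_nonneg_right _ h5.le
            exact mul_le_mul_of_nonneg_right (h2.trans h3) hE0
    · -- large t
      have htt₀ : t₀ < t := by linarith
      have hApos : 0 ≤ E t ^ α := Real.rpow_nonneg (hEnonneg t ht) _
      -- integral lower bound
      have hgi : IntervalIntegrable (fun s => E s ^ α) MeasureTheory.volume t₀ t :=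
        (hEcont.rpow_const (fun x => Or.inr hαpos.le)).intervalIntegrable _ _
      have hmono : ∀ s ∈ Set.Icc t₀ t, E t ^ α ≤ E s ^ α := by
        intro s hs
        have hs0 : (0:ℝ) ≤ s := le_trans ht₀ hs.1
        exact Real.rpow_le_rpow (hEnonneg t ht)
          (hEanti hs0 (le_trans hs0 hs.2) hs.2) hαpos.le
      have hlow : (t - t₀) * E t ^ α ≤ ∫ s in t₀..t, E s ^ α := by
        have := intervalIntegral.integral_mono_on htt₀.le
          (intervalIntegrable_const) hgi hmono
        simpa [intervalIntegral.integral_const, smul_eq_mul] using this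
      have hup : (t - t₀) * E t ^ α ≤ C * E 0 := hlow.trans (hint t htt₀)
      -- E t ^ α ≤ K / (1 + t)
      have hkey : E t ^ α ≤ K / (1 + t) := by
        rw [le_div_iff₀ h1t]
        nlinarith [mul_le_mul_of_nonneg_right hup (by linarith : (0:ℝ) ≤ 2 + t₀),
          mul_le_mul_of_nonneg_left (by nlinarith : 1 + t ≤ (t - t₀) * (2 + t₀)) hApos]
      -- take rpow β
      have hEt : E t = (E t ^ α) ^ β := by
        rw [hβα, one_div, Real.rpow_rpow_inv (hEnonneg t ht) hαpos.ne']
      have h2 : (E t ^ α) ^ β ≤ (K / (1 + t)) ^ β :=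
        Real.rpow_le_rpow hApos hkey hβpos.le
      have h3 : (K / (1 + t)) ^ β = K ^ β * (1 + t) ^ (-β) := by
        rw [Real.div_rpow hKpos.le h1t.le, Real.rpow_neg h1t.le, div_eq_mul_inv]
      have h4 : K ^ β ≤ C' * E 0 := by
        have := le_max_right ((2 + t₀) ^ β) (K ^ β / E 0)
        calc K ^ β = K ^ β / E 0 * E 0 := by field_simp
        _ ≤ C' * E 0 := mul_le_mul_of_nonneg_right this hE0
      have h5 : (0:ℝ) ≤ (1 + t) ^ (-β) := (Real.rpow_pos_of_pos h1t _).le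
      calc E t = (E t ^ α) ^ β := hEt
      _ ≤ K ^ β * (1 + t) ^ (-β) := h2.trans_eq h3
      _ ≤ C' * E 0 * (1 + t) ^ (-β) := mul_le_mul_of_nonneg_right h4 h5
end

section
/- Let α > 0, β ∈ (0,1), and G(t) = β·t/(ln(α/t))^{1/β−1} on (0, α). Then G₁(t) := ∫_t^α 1/(s·G'(s)) ds satisfies G₁(t) ≤ (ln(α/t))^{1/β} for all t ∈ (0, α), where G'(s) = (1 − β + β·ln(α/s))/(ln(α/s))^{1/β}. -/
open Real Set intervalIntegral MeasureTheory

/-! After the substitution `τ = log (α / s)` the integrand becomes `τ ^ (1/β) / (1 - β + β τ)`;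
bounding the denominator below by `β τ` leaves `(1/β) τ ^ (1/β - 1)`, an exact derivative.
In the variable `s` this bound reads `(1/β) log (α/s) ^ (1/β - 1) / s = -(d/ds) log (α/s) ^ (1/β)`. -/

theorem ne_zero_of_mem_uIcc {a t s : ℝ} (ha : 0 < a) (ht : 0 < t) (hs : s ∈ uIcc t a) : s ≠ 0 :=
  (lt_of_lt_of_le (lt_min ht ha) hs.1).ne'

theorem continuousOn_log_div {a t : ℝ} (ha : 0 < a) (ht : 0 < t) :
    ContinuousOn (fun s => log (a / s)) (uIcc t a) :=
  (continuousOn_const.div continuousOn_id fun _ => ne_zero_of_mem_uIcc ha ht).log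
    fun _ hs => div_ne_zero ha.ne' (ne_zero_of_mem_uIcc ha ht hs)

theorem continuousOn_rpow_log_div {a t q : ℝ} (ha : 0 < a) (ht : 0 < t) (hq : 0 ≤ q) :
    ContinuousOn (fun s => log (a / s) ^ q) (uIcc t a) :=
  (continuousOn_log_div ha ht).rpow_const fun _ _ => Or.inr hq

theorem hasDerivAt_rpow_log_div {a s p : ℝ} (ha : a ≠ 0) (hs : s ≠ 0) (hp : 1 ≤ p) :
    HasDerivAt (fun u => log (a / u) ^ p) (-(p * log (a / s) ^ (p - 1) / s)) s := by
  have hlog : HasDerivAt (fun u => log (a / u)) (-s⁻¹) s := by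
    have := ((hasDerivAt_inv hs).const_mul a).log (mul_ne_zero ha (inv_ne_zero hs))
    simp only [← div_eq_mul_inv] at this
    convert this using 1
    field_simp
  convert hlog.rpow_const (Or.inr hp) using 1
  ring

theorem intervalIntegrable_mul_rpow_log_div_div {a t p : ℝ} (ha : 0 < a) (ht : 0 < t)
    (hp : 1 ≤ p) : IntervalIntegrable (fun s => p * log (a / s) ^ (p - 1) / s) volume t a :=
  ((continuousOn_const.mul (continuousOn_rpow_log_div ha ht (by linarith))).div
    continuousOn_id fun _ => ne_zero_of_mem_uIcc ha ht).intervalIntegrable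

theorem integral_mul_rpow_log_div_div {a t p : ℝ} (ha : 0 < a) (ht : 0 < t) (hp : 1 ≤ p) :
    ∫ s in t..a, p * log (a / s) ^ (p - 1) / s = log (a / t) ^ p := by
  have hderiv := fun s (hs : s ∈ uIcc t a) => hasDerivAt_rpow_log_div ha.ne' (ne_zero_of_mem_uIcc ha ht hs) hp
  rw [← neg_neg (∫ _ in t..a, _), ← intervalIntegral.integral_neg,
    integral_eq_sub_of_hasDerivAt hderiv (intervalIntegrable_mul_rpow_log_div_div ha ht hp).neg]
  simp [zero_rpow (by positivity : p ≠ 0)]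

theorem rpow_div_one_sub_add_mul_le {L β : ℝ} (hL : 0 ≤ L) (hβ₀ : 0 < β) (hβ₁ : β ≤ 1) :
    L ^ (1 / β) / (1 - β + β * L) ≤ 1 / β * L ^ (1 / β - 1) := by
  rcases hL.eq_or_lt with rfl | hL
  · rw [zero_rpow (by positivity), zero_div]
    positivity
  · calc L ^ (1 / β) / (1 - β + β * L) ≤ L ^ (1 / β) / (β * L) := by gcongr; linarith
      _ = 1 / β * L ^ (1 / β - 1) := by
        rw [rpow_sub_one hL.ne']
        field_simp

theorem stmt11 (α β : ℝ) (hα : 0 < α) (hβ : β ∈ Set.Ioo (0 : ℝ) 1)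
    (G' G₁ : ℝ → ℝ)
    (hG' : ∀ s ∈ Set.Ioo 0 α,
      G' s = (1 - β + β * Real.log (α / s)) / (Real.log (α / s)) ^ (1 / β))
    (hG₁ : ∀ t ∈ Set.Ioo 0 α, G₁ t = ∫ s in t..α, 1 / (s * G' s)) :
    ∀ t ∈ Set.Ioo 0 α, G₁ t ≤ (Real.log (α / t)) ^ (1 / β) := by
  obtain ⟨hβ₀, hβ₁⟩ := hβ
  rintro t ⟨ht, htα⟩
  have hp : 1 ≤ 1 / β := by rw [le_div_iff₀ hβ₀]; linarith
  have hI : uIcc t α = Icc t α := uIcc_of_le htα.le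
  have hlog : ∀ s ∈ Icc t α, 0 ≤ log (α / s) := fun s hs =>
    log_nonneg ((one_le_div (ht.trans_le hs.1)).mpr hs.2)
  have hG₁t : G₁ t = ∫ s in t..α, log (α / s) ^ (1 / β) / (1 - β + β * log (α / s)) / s := by
    rw [hG₁ t ⟨ht, htα⟩]
    refine integral_congr_Ioo_of_le htα.le fun s hs => ?_
    rw [hG' s ⟨ht.trans hs.1, hs.2⟩]
    simp only [div_eq_mul_inv, mul_inv, inv_inv]
    ring
  rw [hG₁t, ← integral_mul_rpow_log_div_div hα ht hp]
  refine integral_mono_on htα.le ?_ ?_ fun s hs => ?_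
  · refine ContinuousOn.intervalIntegrable ?_
    refine ((continuousOn_rpow_log_div hα ht (by linarith)).div ?_ ?_).div continuousOn_id
      fun _ => ne_zero_of_mem_uIcc hα ht
    · exact continuousOn_const.add (continuousOn_const.mul (continuousOn_log_div hα ht))
    · exact fun s hs => (add_pos_of_pos_of_nonneg (by linarith)
        (mul_nonneg hβ₀.le (hlog s (hI ▸ hs)))).ne'
  · exact intervalIntegrable_mul_rpow_log_div_div hα ht hp
  · exact div_le_div_of_nonneg_right (rpow_div_one_sub_add_mul_le (hlog s hs) hβ₀ hβ₁.le)
      (ht.trans_le hs.1).le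
end

section
/- Let S : [t₀, ∞) → (0, ∞) be differentiable, k₁ > 0, ξ : [t₀, ∞) → (0, ∞) continuous, and G₂ : (0, f₀] → (0, ∞) continuous positive, satisfying S'(t) ≤ −k₁·ξ(t)·G₂(S(t)) with ε₁·S(t) ≤ f₀ for all t ≥ t₀, where G₂(s) = s·G'(ε₁ s) and G₁(t) = ∫_t^{f₀} ds/(s·G'(s)). If ε₁·S(t₀) = f₀, then for all t ≥ t₀: S(t) ≤ (1/ε₁)·G₁⁻¹(k₁·∫_{t₀}^t ξ(s) ds). -/
open Real Set intervalIntegral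

theorem stmt16 (f₀ ε₁ k₁ t₀ : ℝ) (hf₀ : 0 < f₀) (hε₁ : 0 < ε₁) (hk₁ : 0 < k₁)
    (G G' : ℝ → ℝ)
    (hG : ContDiffOn ℝ 2 G (Set.Icc 0 f₀))
    (hderiv : ∀ s ∈ Set.Icc 0 f₀, HasDerivWithinAt G (G' s) (Set.Icc 0 f₀) s)
    (hmono : StrictMonoOn G (Set.Icc 0 f₀))
    (hconv : StrictConvexOn ℝ (Set.Icc 0 f₀) G)
    (hG0 : G 0 = 0) (hG'0 : G' 0 = 0)
    (hG'pos : ∀ s ∈ Set.Ioc 0 f₀, 0 < G' s)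
    (G₂ : ℝ → ℝ) (hG₂ : ∀ s, G₂ s = s * G' (ε₁ * s))
    (G₁ G₁inv : ℝ → ℝ) (hG₁ : ∀ x, G₁ x = ∫ s in x..f₀, 1 / (s * G' s))
    (hG₁inv_mem : ∀ y ≥ (0 : ℝ), G₁inv y ∈ Set.Ioc 0 f₀)
    (hG₁inv : ∀ y ≥ (0 : ℝ), G₁ (G₁inv y) = y)
    (hG₁inv_left : ∀ x ∈ Set.Ioc 0 f₀, G₁inv (G₁ x) = x)
    (ξ : ℝ → ℝ) (hξcont : ContinuousOn ξ (Set.Ici t₀)) (hξpos : ∀ s ≥ t₀, 0 < ξ s)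
    (S : ℝ → ℝ) (hSpos : ∀ t ≥ t₀, 0 < S t)
    (hSdiff : ∀ t ≥ t₀, DifferentiableAt ℝ S t)
    (hSineq : ∀ t ≥ t₀, deriv S t ≤ -(k₁ * ξ t * G₂ (S t)))
    (hSbound : ∀ t ≥ t₀, ε₁ * S t ≤ f₀)
    (hSt₀ : ε₁ * S t₀ = f₀) :
    ∀ t ≥ t₀, S t ≤ (1 / ε₁) * G₁inv (k₁ * ∫ s in t₀..t, ξ s) := by
  intro t ht
  set g : ℝ → ℝ := fun s => 1 / (s * G' s) with hgdef
  -- G' is continuous on Icc 0 f₀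
  have hUD : UniqueDiffOn ℝ (Set.Icc 0 f₀) := uniqueDiffOn_Icc hf₀
  have hG'cont : ContinuousOn G' (Set.Icc 0 f₀) := by
    have h1 : ContinuousOn (derivWithin G (Set.Icc 0 f₀)) (Set.Icc 0 f₀) :=
      hG.continuousOn_derivWithin hUD (by norm_num)
    exact h1.congr fun s hs => ((hderiv s hs).derivWithin (hUD s hs)).symm
  -- g is continuous and positive on Ioc 0 f₀
  have hgcont : ContinuousOn g (Set.Ioc 0 f₀) := by
    apply ContinuousOn.div continuousOn_const
    · exact (continuousOn_id.mono Ioc_subset_Icc_self).mul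
        (hG'cont.mono Ioc_subset_Icc_self)
    · intro s hs
      exact (mul_pos hs.1 (hG'pos s hs)).ne'
  have hgpos : ∀ s ∈ Set.Ioc 0 f₀, 0 < g s := fun s hs =>
    div_pos one_pos (mul_pos hs.1 (hG'pos s hs))
  have hgint : ∀ a ∈ Set.Ioc (0:ℝ) f₀, IntervalIntegrable g MeasureTheory.volume a f₀ := by
    intro a ha
    apply ContinuousOn.intervalIntegrable
    rw [uIcc_of_le ha.2]
    exact hgcont.mono (fun x hx => ⟨lt_of_lt_of_le ha.1 hx.1, hx.2⟩)
  -- G₁ is strictly antitone on Ioc 0 f₀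
  have hanti : ∀ a ∈ Set.Ioc (0:ℝ) f₀, ∀ b ∈ Set.Ioc (0:ℝ) f₀, a < b → G₁ b < G₁ a := by
    intro a ha b hb hab
    have hint_ab : IntervalIntegrable g MeasureTheory.volume a b := by
      apply ContinuousOn.intervalIntegrable
      rw [uIcc_of_le hab.le]
      exact hgcont.mono (fun x hx => ⟨lt_of_lt_of_le ha.1 hx.1, le_trans hx.2 hb.2⟩)
    have hsplit : (∫ s in a..b, g s) + (∫ s in b..f₀, g s) = ∫ s in a..f₀, g s :=
      intervalIntegral.integral_add_adjacent_intervals hint_ab (hgint b hb)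
    have hpos : 0 < ∫ s in a..b, g s :=
      intervalIntegral_pos_of_pos_on hint_ab
        (fun x hx => hgpos x ⟨lt_trans ha.1 hx.1, le_trans hx.2.le hb.2⟩) hab
    rw [hG₁, hG₁]
    show (∫ s in b..f₀, g s) < ∫ s in a..f₀, g s
    linarith
  -- ε₁ * S u ∈ Ioc 0 f₀ for u ≥ t₀
  have hmem : ∀ u ≥ t₀, ε₁ * S u ∈ Set.Ioc 0 f₀ :=
    fun u hu => ⟨mul_pos hε₁ (hSpos u hu), hSbound u hu⟩
  -- deriv S < 0 on Ici t₀
  have hSderiv_neg : ∀ u ≥ t₀, deriv S u < 0 := by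
    intro u hu
    have h1 := hSineq u hu
    have h2 : 0 < G₂ (S u) := by
      rw [hG₂]
      exact mul_pos (hSpos u hu) (hG'pos _ (hmem u hu))
    have h3 := mul_pos (mul_pos hk₁ (hξpos u hu)) h2
    linarith
  have hScont : ContinuousOn S (Set.Ici t₀) :=
    fun u hu => (hSdiff u hu).continuousAt.continuousWithinAt
  -- S strictly decreasing, so ε₁ * S u < f₀ for u > t₀
  have hSanti : StrictAntiOn S (Set.Ici t₀) := by
    apply strictAntiOn_of_deriv_neg (convex_Ici t₀) hScont
    intro u hu
    rw [interior_Ici] at hu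
    exact hSderiv_neg u hu.le
  have hltf₀ : ∀ u > t₀, ε₁ * S u < f₀ := by
    intro u hu
    have h := hSanti (self_mem_Ici) (le_of_lt hu : t₀ ≤ u) hu
    calc ε₁ * S u < ε₁ * S t₀ := by nlinarith
    _ = f₀ := hSt₀
  have hG₁eq : G₁ = fun x => ∫ s in x..f₀, g s := funext hG₁
  have hG₁f₀ : G₁ f₀ = 0 := by rw [hG₁]; exact intervalIntegral.integral_same
  -- Main inequality: k₁ * ∫ ξ ≤ G₁ (ε₁ * S t)
  have key : k₁ * (∫ s in t₀..t, ξ s) ≤ G₁ (ε₁ * S t) := by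
    rcases eq_or_lt_of_le ht with heq | hlt'
    · subst heq
      simp [hSt₀, hG₁f₀]
    -- min of S on [t₀, t]
    obtain ⟨u₀, hu₀, hminS⟩ := isCompact_Icc.exists_isMinOn (Set.nonempty_Icc.mpr ht)
      (hScont.mono (Icc_subset_Ici_self))
    set c : ℝ := ε₁ * S u₀ with hc
    have hcmem : c ∈ Set.Ioc (0:ℝ) f₀ := hmem u₀ hu₀.1
    have hrange : ∀ u ∈ Set.Icc t₀ t, ε₁ * S u ∈ Set.Icc c f₀ := by
      intro u hu
      refine ⟨?_, hSbound u hu.1⟩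
      have hle : S u₀ ≤ S u := hminS hu
      exact mul_le_mul_of_nonneg_left hle hε₁.le
    have hξint : MeasureTheory.IntegrableOn ξ (Set.uIcc t₀ t) := by
      rw [uIcc_of_le ht]
      exact (hξcont.mono Icc_subset_Ici_self).integrableOn_compact isCompact_Icc
    set H : ℝ → ℝ := fun u => G₁ (ε₁ * S u) - k₁ * ∫ s in t₀..u, ξ s with hHdef
    -- continuity of H on Icc t₀ t
    have hG₁cont : ContinuousOn G₁ (Set.Icc c f₀) := by
      rw [hG₁eq]
      have h1 : MeasureTheory.IntegrableOn g (Set.uIcc c f₀) := by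
        rw [uIcc_of_le hcmem.2]
        exact ((hgcont.mono (fun x hx => ⟨lt_of_lt_of_le hcmem.1 hx.1, hx.2⟩)).integrableOn_compact
          isCompact_Icc)
      have := intervalIntegral.continuousOn_primitive_interval_left h1
      rwa [uIcc_of_le hcmem.2] at this
    have hHcont : ContinuousOn H (Set.Icc t₀ t) := by
      apply ContinuousOn.sub
      · exact hG₁cont.comp ((continuousOn_const.mul (hScont.mono Icc_subset_Ici_self))) hrange
      · apply ContinuousOn.mul continuousOn_const
        have := intervalIntegral.continuousOn_primitive_interval hξint
        rwa [uIcc_of_le ht] at this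
    -- derivative of H on interior
    have hHderiv : ∀ u ∈ Set.Ioo t₀ t, ∃ d, HasDerivAt H d u ∧ 0 ≤ d := by
      intro u hu
      have hu' : t₀ ≤ u := hu.1.le
      set x : ℝ := ε₁ * S u with hx
      have hxmem : x ∈ Set.Ioo 0 f₀ := ⟨mul_pos hε₁ (hSpos u hu'), hltf₀ u hu.1⟩
      have hgcont' : ContinuousOn g (Set.Ioo 0 f₀) := hgcont.mono Ioo_subset_Ioc_self
      -- derivative of G₁ at x
      have hd1 : HasDerivAt (fun y => ∫ s in y..f₀, g s) (-(g x)) x :=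
        intervalIntegral.integral_hasDerivAt_left (hgint x (Ioo_subset_Ioc_self hxmem))
          (hgcont'.stronglyMeasurableAtFilter isOpen_Ioo x hxmem)
          (hgcont'.continuousAt (isOpen_Ioo.mem_nhds hxmem))
      have hdG₁ : HasDerivAt G₁ (-(g x)) x := by rw [hG₁eq]; exact hd1
      -- derivative of inner function
      have hdin : HasDerivAt (fun v => ε₁ * S v) (ε₁ * deriv S u) u :=
        ((hSdiff u hu').hasDerivAt).const_mul ε₁
      have hcomp : HasDerivAt (fun v => G₁ (ε₁ * S v)) (-(g x) * (ε₁ * deriv S u)) u :=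
        hdG₁.comp u hdin
      -- derivative of the integral of ξ
      have hdint : HasDerivAt (fun v => ∫ s in t₀..v, ξ s) (ξ u) u := by
        apply intervalIntegral.integral_hasDerivAt_right
        · apply ContinuousOn.intervalIntegrable
          rw [uIcc_of_le hu']
          exact hξcont.mono (Icc_subset_Ici_self)
        · exact (hξcont.mono (Ioi_subset_Ici_self)).stronglyMeasurableAtFilter isOpen_Ioi u hu.1
        · exact (hξcont.mono (Ioi_subset_Ici_self)).continuousAt (isOpen_Ioi.mem_nhds hu.1)
      have hdH : HasDerivAt H (-(g x) * (ε₁ * deriv S u) - k₁ * ξ u) u :=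
        hcomp.sub (hdint.const_mul k₁)
      refine ⟨_, hdH, ?_⟩
      -- positivity of the derivative
      have hA : 0 < x * G' x := mul_pos hxmem.1 (hG'pos x (Ioo_subset_Ioc_self hxmem))
      have hgx : g x = 1 / (x * G' x) := rfl
      have hineq : k₁ * ξ u * (S u * G' x) ≤ -deriv S u := by
        have := hSineq u hu'
        rw [hG₂] at this
        linarith
      have hξu := hξpos u hu'
      have hSu := hSpos u hu'
      have hkey : k₁ * ξ u * (x * G' x) ≤ ε₁ * (-deriv S u) := by
        calc k₁ * ξ u * (x * G' x) = ε₁ * (k₁ * ξ u * (S u * G' x)) := by rw [hx]; ring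
        _ ≤ ε₁ * (-deriv S u) := mul_le_mul_of_nonneg_left hineq hε₁.le
      have h2 : k₁ * ξ u ≤ ε₁ * (-deriv S u) / (x * G' x) := (le_div_iff₀ hA).mpr hkey
      have heq : -(1 / (x * G' x)) * (ε₁ * deriv S u) = ε₁ * (-deriv S u) / (x * G' x) := by
        ring
      show 0 ≤ -(1 / (x * G' x)) * (ε₁ * deriv S u) - k₁ * ξ u
      linarith
    -- H is monotone
    have hHmono : MonotoneOn H (Set.Icc t₀ t) := by
      apply monotoneOn_of_deriv_nonneg (convex_Icc t₀ t) hHcont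
      · intro u hu
        rw [interior_Icc] at hu
        obtain ⟨d, hd, _⟩ := hHderiv u hu
        exact hd.differentiableAt.differentiableWithinAt
      · intro u hu
        rw [interior_Icc] at hu
        obtain ⟨d, hd, hdpos⟩ := hHderiv u hu
        rw [hd.deriv]
        exact hdpos
    have h0 : H t₀ = 0 := by
      simp only [hHdef, hSt₀, hG₁f₀, intervalIntegral.integral_same, mul_zero, sub_zero]
    have h1 : H t₀ ≤ H t := hHmono (left_mem_Icc.mpr ht) (right_mem_Icc.mpr ht) ht
    rw [h0] at h1
    simp only [hHdef] at h1
    linarith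
  -- conclusion
  have hynn : 0 ≤ k₁ * ∫ s in t₀..t, ξ s := by
    apply mul_nonneg hk₁.le
    apply intervalIntegral.integral_nonneg ht
    exact fun u hu => (hξpos u hu.1).le
  set y : ℝ := k₁ * ∫ s in t₀..t, ξ s with hy
  by_contra hcon
  push_neg at hcon
  have hinv_mem := hG₁inv_mem y hynn
  have hlt2 : G₁inv y < ε₁ * S t := by
    rw [div_mul_eq_mul_div, one_mul, div_lt_iff₀ hε₁] at hcon
    linarith
  have := hanti (G₁inv y) hinv_mem (ε₁ * S t) (hmem t ht) hlt2
  rw [hG₁inv y hynn] at this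
  linarith
end

section
/- Let E : [t₀, ∞) → [0, ∞) be differentiable and nonincreasing, q > 1, and φ(t) := E(t)^{(q−1)/2}. Suppose J'(t) + ε·E(t) ≤ C·(−E'(t)) + C·(−E'(t))^{2/(q+1)} for all t ≥ t₀, where J ≥ 0 is differentiable with J(t₀) ≤ C·E(0), and ε, C > 0. Then ∫_{t₀}^∞ E(t)^{(q+1)/2} dt ≤ C'·(E(0) + E(0)^{(q+1)/2}) for some constant C' > 0. -/
open Real Set intervalIntegral

/-! Multiplying the dissipation inequality by the nonincreasing weight `(E + η) ^ a`,
`a = (q - 1) / 2`, and absorbing `C (E + η) ^ a (-E') ^ (1 / (a + 1))` by Young's inequality with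
exponents `(a + 1) / a` and `a + 1` shows that
`K E + (E + η) ^ a J + ε / 2 ∫ (E ^ (a + 1) - η ^ (a + 1))` is nonincreasing: the integration by
parts of the multiplier argument is the product rule, and the term `((E + η) ^ a)' J` it produces
is `≤ 0` because `E` decreases and `J ≥ 0`. The shift `η > 0` keeps the weight differentiable where
`E` vanishes; its cost `η ^ (a + 1) (τ - t₀)` is made `≤ E t₀` by choosing `η` depending on `τ`. -/

theorem Real.rpow_add_le_mul_rpow_add_rpow {x y p : ℝ} (hx : 0 ≤ x) (hy : 0 ≤ y) (hp : 1 ≤ p) :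
    (x + y) ^ p ≤ 2 ^ (p - 1) * (x ^ p + y ^ p) := by
  exact_mod_cast NNReal.rpow_add_le_mul_rpow_add_rpow ⟨x, hx⟩ ⟨y, hy⟩ hp

theorem Real.exists_mul_le_mul_rpow_add_mul_rpow {p r δ : ℝ} (hpr : p.HolderConjugate r)
    (hδ : 0 < δ) : ∃ K > 0, ∀ x y : ℝ, 0 ≤ x → 0 ≤ y → x * y ≤ δ * x ^ p + K * y ^ r := by
  have hp := hpr.pos
  have hr := hpr.symm.pos
  set c := (δ * p) ^ p⁻¹ with hc_def
  have hc : 0 < c := by positivity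
  have hcp : c ^ p = δ * p := by
    rw [hc_def, ← rpow_mul (by positivity), inv_mul_cancel₀ hp.ne', rpow_one]
  refine ⟨(c ^ r)⁻¹ / r, by positivity, fun x y hx hy => ?_⟩
  calc x * y = (c * x) * (y / c) := by field_simp
    _ ≤ (c * x) ^ p / p + (y / c) ^ r / r :=
        young_inequality_of_nonneg (by positivity) (by positivity) hpr
    _ = δ * x ^ p + (c ^ r)⁻¹ / r * y ^ r := by
        rw [mul_rpow hc.le hx, div_rpow hy hc.le, hcp]
        field_simp

theorem exists_pos_le_and_rpow_mul_le {A T r : ℝ} (hA : 0 < A) (hT : 0 ≤ T) (hr : 0 < r) :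
    ∃ η > 0, η ≤ A ∧ η ^ r * T ≤ A := by
  set b := A / (T + 1) with hb_def
  have hb : 0 < b := by positivity
  refine ⟨min A (b ^ r⁻¹), lt_min hA (by positivity), min_le_left _ _, ?_⟩
  calc min A (b ^ r⁻¹) ^ r * T ≤ (b ^ r⁻¹) ^ r * (T + 1) := by
        gcongr
        · exact min_le_right _ _
        · linarith
    _ = A := by
        rw [← rpow_mul hb.le, inv_mul_cancel₀ hr.ne', rpow_one, hb_def]
        field_simp

theorem rpow_mul_le_of_dissipation {a ε C K Ψ η e d j : ℝ} (ha : 0 < a) (hε : 0 ≤ ε)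
    (hC : 0 ≤ C) (he : 0 ≤ e) (hη : 0 ≤ η) (hd : 0 ≤ d) (hΨ : (e + η) ^ a ≤ Ψ)
    (hK : ∀ x y : ℝ, 0 ≤ x → 0 ≤ y →
      x * y ≤ ε / 2 ^ (a + 1) * x ^ ((a + 1) / a) + K * y ^ (a + 1))
    (h : j + ε * e ≤ C * d + C * d ^ (1 / (a + 1))) :
    (e + η) ^ a * j ≤ (C * Ψ + K * C ^ (a + 1)) * d - ε / 2 * (e ^ (a + 1) - η ^ (a + 1)) := by
  set w := (e + η) ^ a
  have hw : 0 ≤ w := by positivity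
  have hyoung : w * (C * d ^ (1 / (a + 1))) ≤
      ε / 2 ^ (a + 1) * (e + η) ^ (a + 1) + K * C ^ (a + 1) * d := by
    have hwp : w ^ ((a + 1) / a) = (e + η) ^ (a + 1) := by
      rw [← rpow_mul (by positivity), mul_div_cancel₀ _ ha.ne']
    have hy : (C * d ^ (1 / (a + 1))) ^ (a + 1) = C ^ (a + 1) * d := by
      rw [mul_rpow hC (by positivity), ← rpow_mul hd, one_div_mul_cancel (by linarith), rpow_one]
    have := hK w (C * d ^ (1 / (a + 1))) hw (by positivity)
    rw [hwp, hy] at this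
    linarith
  have hsplit : ε / 2 ^ (a + 1) * (e + η) ^ (a + 1) ≤ ε / 2 * (e ^ (a + 1) + η ^ (a + 1)) :=
    calc ε / 2 ^ (a + 1) * (e + η) ^ (a + 1)
        ≤ ε / 2 ^ (a + 1) * (2 ^ a * (e ^ (a + 1) + η ^ (a + 1))) := by
          gcongr
          simpa using rpow_add_le_mul_rpow_add_rpow he hη (by linarith : 1 ≤ a + 1)
      _ = ε / 2 * (e ^ (a + 1) + η ^ (a + 1)) := by
          rw [rpow_add two_pos, rpow_one]
          field_simp
  have hgain : ε * e ^ (a + 1) ≤ ε * (w * e) := by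
    rw [rpow_add_one' he (by linarith)]
    gcongr
    exact rpow_le_rpow he (by linarith) ha.le
  have hCΨ : C * w * d ≤ C * Ψ * d := by gcongr
  have hwj : w * j ≤ w * (C * d + C * d ^ (1 / (a + 1)) - ε * e) :=
    mul_le_mul_of_nonneg_left (by linarith) hw
  linarith

section Dissipation

variable {E J : ℝ → ℝ} {a ε C K t₀ : ℝ}

theorem integral_rpow_sub_le_of_dissipation (ha : 0 < a) (hε : 0 ≤ ε) (hC : 0 ≤ C)
    (hEdiff : Differentiable ℝ E) (hJdiff : Differentiable ℝ J)
    (hEanti : AntitoneOn E (Ici t₀)) (hEnonneg : ∀ t ≥ t₀, 0 ≤ E t)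
    (hJnonneg : ∀ t ≥ t₀, 0 ≤ J t) (hK₀ : 0 ≤ K)
    (hK : ∀ x y : ℝ, 0 ≤ x → 0 ≤ y →
      x * y ≤ ε / 2 ^ (a + 1) * x ^ ((a + 1) / a) + K * y ^ (a + 1))
    (hineq : ∀ t ≥ t₀, deriv J t + ε * E t ≤
      C * -deriv E t + C * (-deriv E t) ^ (1 / (a + 1)))
    {η τ : ℝ} (hη : 0 < η) (hτ : t₀ ≤ τ) :
    ε / 2 * ∫ t in t₀..τ, (E t ^ (a + 1) - η ^ (a + 1)) ≤
      (C * (E t₀ + η) ^ a + K * C ^ (a + 1)) * E t₀ + (E t₀ + η) ^ a * J t₀ := by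
  set K₁ := C * (E t₀ + η) ^ a + K * C ^ (a + 1)
  set W : ℝ → ℝ := fun t => K₁ * E t + (E t + η) ^ a * J t +
    ε / 2 * ∫ s in t₀..t, (E s ^ (a + 1) - η ^ (a + 1))
  set W' : ℝ → ℝ := fun t => K₁ * deriv E t +
    (deriv E t * a * (E t + η) ^ (a - 1) * J t + (E t + η) ^ a * deriv J t) +
    ε / 2 * (E t ^ (a + 1) - η ^ (a + 1))
  have hcont : Continuous fun s => E s ^ (a + 1) - η ^ (a + 1) :=
    (hEdiff.continuous.rpow_const fun _ => Or.inr (by linarith)).sub continuous_const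
  have hW : ∀ t ≥ t₀, HasDerivAt W (W' t) t := by
    intro t ht
    have hE := (hEdiff t).hasDerivAt
    have hweight := (hE.add_const η).rpow_const (p := a)
      (Or.inl (by linarith [hEnonneg t ht] : 0 < E t + η).ne')
    exact ((hE.const_mul K₁).add (hweight.mul (hJdiff t).hasDerivAt)).add
      ((integral_hasDerivAt_right (hcont.intervalIntegrable _ _)
        (hcont.stronglyMeasurableAtFilter _ _) hcont.continuousAt).const_mul _)
  have hW'_nonpos : ∀ t ≥ t₀, W' t ≤ 0 := by
    intro t ht
    have hEt := hEnonneg t ht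
    have hE' : deriv E t ≤ 0 := (hEdiff t).hasDerivAt.hasDerivWithinAt.nonpos_of_antitoneOn
      (uniqueDiffOn_Ici t₀ t ht).accPt hEanti
    have hweight : (E t + η) ^ a ≤ (E t₀ + η) ^ a := by
      gcongr
      exact hEanti self_mem_Ici ht ht
    have hmain := rpow_mul_le_of_dissipation ha hε hC hEt hη.le (neg_nonneg.2 hE') hweight hK
      (hineq t ht)
    have hdrop : deriv E t * a * (E t + η) ^ (a - 1) * J t ≤ 0 :=
      mul_nonpos_of_nonpos_of_nonneg
        (mul_nonpos_of_nonpos_of_nonneg (mul_nonpos_of_nonpos_of_nonneg hE' ha.le)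
          (by positivity)) (hJnonneg t ht)
    simp only [W']
    linarith
  have hanti : AntitoneOn W (Icc t₀ τ) := by
    refine antitoneOn_of_deriv_nonpos (convex_Icc _ _)
      (fun t ht => (hW t ht.1).continuousAt.continuousWithinAt) ?_ ?_ <;> rw [interior_Icc]
    · exact fun t ht => (hW t ht.1.le).differentiableAt.differentiableWithinAt
    · exact fun t ht => (hW t ht.1.le).deriv ▸ hW'_nonpos t ht.1.le
  have hWτ := hanti (left_mem_Icc.2 hτ) (right_mem_Icc.2 hτ) hτ
  have hτ_nonneg : 0 ≤ K₁ * E τ + (E τ + η) ^ a * J τ := by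
    have := hEnonneg τ hτ
    have := hJnonneg τ hτ
    have := hEnonneg t₀ le_rfl
    positivity
  simp only [W, integral_same] at hWτ
  linarith

theorem integral_rpow_le_of_dissipation (ha : 0 < a) (hε : 0 < ε) (hC : 0 ≤ C)
    (hEdiff : Differentiable ℝ E) (hJdiff : Differentiable ℝ J)
    (hEanti : AntitoneOn E (Ici t₀)) (hEnonneg : ∀ t ≥ t₀, 0 ≤ E t)
    (hJnonneg : ∀ t ≥ t₀, 0 ≤ J t) (hK₀ : 0 ≤ K)
    (hK : ∀ x y : ℝ, 0 ≤ x → 0 ≤ y →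
      x * y ≤ ε / 2 ^ (a + 1) * x ^ ((a + 1) / a) + K * y ^ (a + 1))
    (hineq : ∀ t ≥ t₀, deriv J t + ε * E t ≤
      C * -deriv E t + C * (-deriv E t) ^ (1 / (a + 1)))
    {τ : ℝ} (hτ : t₀ ≤ τ) :
    ∫ t in t₀..τ, E t ^ (a + 1) ≤
      2 / ε * ((C * (2 * E t₀) ^ a + K * C ^ (a + 1)) * E t₀ + (2 * E t₀) ^ a * J t₀) + E t₀ := by
  have ha₁ : (a + 1) ≠ 0 := by linarith
  rcases (hEnonneg t₀ le_rfl).eq_or_lt with hzero | hpos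
  · have hvanish : EqOn (fun t => E t ^ (a + 1)) 0 (uIcc t₀ τ) := by
      intro t ht
      rw [uIcc_of_le hτ] at ht
      have : E t = 0 := le_antisymm (hzero ▸ hEanti self_mem_Ici ht.1 ht.1) (hEnonneg t ht.1)
      simp [this, zero_rpow ha₁]
    simp [integral_congr hvanish, ← hzero, zero_rpow ha.ne']
  · obtain ⟨η, hη, hηE, hητ⟩ :=
      exists_pos_le_and_rpow_mul_le hpos (sub_nonneg.2 hτ) (by linarith : 0 < a + 1)
    have hcont : Continuous fun t => E t ^ (a + 1) :=
      hEdiff.continuous.rpow_const fun _ => Or.inr (by linarith)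
    have h := integral_rpow_sub_le_of_dissipation ha hε.le hC hEdiff hJdiff hEanti hEnonneg
      hJnonneg hK₀ hK hineq hη hτ
    rw [integral_sub (hcont.intervalIntegrable _ _) intervalIntegrable_const, integral_const,
      smul_eq_mul] at h
    have hweight : (E t₀ + η) ^ a ≤ (2 * E t₀) ^ a := by gcongr; linarith
    have hJ₀ := hJnonneg t₀ le_rfl
    have hR : (C * (E t₀ + η) ^ a + K * C ^ (a + 1)) * E t₀ + (E t₀ + η) ^ a * J t₀ ≤
        (C * (2 * E t₀) ^ a + K * C ^ (a + 1)) * E t₀ + (2 * E t₀) ^ a * J t₀ := by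
      gcongr
    have hdrift : ε / 2 * ((τ - t₀) * η ^ (a + 1)) ≤ ε / 2 * E t₀ := by
      rw [mul_comm (τ - t₀)]
      gcongr
    rw [div_mul_eq_mul_div, ← sub_le_iff_le_add, le_div_iff₀ hε]
    linarith

theorem integral_rpow_le_of_dissipation_of_le (ha : 0 < a) (hε : 0 < ε) (hC : 0 ≤ C)
    (hEdiff : Differentiable ℝ E) (hJdiff : Differentiable ℝ J)
    (hEanti : AntitoneOn E (Ici t₀)) (hEnonneg : ∀ t ≥ t₀, 0 ≤ E t)
    (hJnonneg : ∀ t ≥ t₀, 0 ≤ J t) (hK₀ : 0 ≤ K)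
    (hK : ∀ x y : ℝ, 0 ≤ x → 0 ≤ y →
      x * y ≤ ε / 2 ^ (a + 1) * x ^ ((a + 1) / a) + K * y ^ (a + 1))
    (hineq : ∀ t ≥ t₀, deriv J t + ε * E t ≤
      C * -deriv E t + C * (-deriv E t) ^ (1 / (a + 1)))
    {M : ℝ} (hEM : E t₀ ≤ M) (hJM : J t₀ ≤ C * M) {τ : ℝ} (hτ : t₀ ≤ τ) :
    ∫ t in t₀..τ, E t ^ (a + 1) ≤
      (2 / ε * (2 ^ (a + 1) * C + K * C ^ (a + 1)) + 1) * (M + M ^ (a + 1)) := by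
  refine (integral_rpow_le_of_dissipation ha hε hC hEdiff hJdiff hEanti hEnonneg hJnonneg hK₀
    hK hineq hτ).trans ?_
  have he := hEnonneg t₀ le_rfl
  have hM := he.trans hEM
  have hJ₀ := hJnonneg t₀ le_rfl
  have hweight : (2 * E t₀) ^ a ≤ 2 ^ a * M ^ a := by
    rw [← mul_rpow zero_le_two hM]
    gcongr
  have hpow : 2 ^ a * M ^ a * M = 2 ^ (a + 1) * M ^ (a + 1) / 2 := by
    rw [rpow_add_one' hM (by linarith), rpow_add_one two_ne_zero]
    ring
  have hbracket : (C * (2 * E t₀) ^ a + K * C ^ (a + 1)) * E t₀ + (2 * E t₀) ^ a * J t₀ ≤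
      (2 ^ (a + 1) * C + K * C ^ (a + 1)) * (M + M ^ (a + 1)) :=
    calc (C * (2 * E t₀) ^ a + K * C ^ (a + 1)) * E t₀ + (2 * E t₀) ^ a * J t₀
        ≤ (C * (2 ^ a * M ^ a) + K * C ^ (a + 1)) * M + 2 ^ a * M ^ a * (C * M) := by
          gcongr
      _ = 2 ^ (a + 1) * C * M ^ (a + 1) + K * C ^ (a + 1) * M := by
          linear_combination (2 * C) * hpow
      _ ≤ (2 ^ (a + 1) * C + K * C ^ (a + 1)) * (M + M ^ (a + 1)) := by
          nlinarith [show 0 ≤ 2 ^ (a + 1) * C * M by positivity,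
            show 0 ≤ K * C ^ (a + 1) * M ^ (a + 1) by positivity]
  calc 2 / ε * ((C * (2 * E t₀) ^ a + K * C ^ (a + 1)) * E t₀ + (2 * E t₀) ^ a * J t₀) + E t₀
      ≤ 2 / ε * ((2 ^ (a + 1) * C + K * C ^ (a + 1)) * (M + M ^ (a + 1))) +
          (M + M ^ (a + 1)) := by
        gcongr
        linarith [show 0 ≤ M ^ (a + 1) by positivity]
    _ = _ := by ring

end Dissipation

theorem stmt18_general (E J : ℝ → ℝ) (q ε C t₀ : ℝ)
    (hq : 1 < q) (hε : 0 < ε) (hC : 0 < C)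
    (hEdiff : Differentiable ℝ E) (hJdiff : Differentiable ℝ J)
    (hEanti : AntitoneOn E (Set.Ici t₀))
    (hEnonneg : ∀ t ≥ t₀, 0 ≤ E t)
    (hJnonneg : ∀ t ≥ t₀, 0 ≤ J t)
    (hE0 : E t₀ ≤ E 0)
    (hJt₀ : J t₀ ≤ C * E 0)
    (hineq : ∀ t ≥ t₀, deriv J t + ε * E t ≤
      C * (-(deriv E t)) + C * (-(deriv E t)) ^ (2 / (q + 1))) :
    ∃ C' > 0, ∀ τ ≥ t₀,
      (∫ t in t₀..τ, E t ^ ((q + 1) / 2)) ≤ C' * (E 0 + E 0 ^ ((q + 1) / 2)) := by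
  set a := (q - 1) / 2 with ha_def
  have ha : 0 < a := by rw [ha_def]; linarith
  have hr : (q + 1) / 2 = a + 1 := by ring
  have hs : 2 / (q + 1) = 1 / (a + 1) := by rw [← hr]; field_simp
  have hpr : ((a + 1) / a).HolderConjugate (a + 1) :=
    ((holderConjugate_iff_eq_conjExponent (by linarith)).2 (by ring_nf)).symm
  obtain ⟨K, hK, hYoung⟩ := exists_mul_le_mul_rpow_add_mul_rpow hpr
    (by positivity : 0 < ε / 2 ^ (a + 1))
  refine ⟨2 / ε * (2 ^ (a + 1) * C + K * C ^ (a + 1)) + 1, by positivity, fun τ hτ => ?_⟩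
  rw [hr]
  exact integral_rpow_le_of_dissipation_of_le ha hε hC.le hEdiff hJdiff hEanti hEnonneg
    hJnonneg hK.le hYoung (by simpa only [hs] using hineq) hE0 hJt₀ hτ

theorem stmt18 (E J : ℝ → ℝ) (q ε C t₀ : ℝ)
    (hq : 1 < q) (hε : 0 < ε) (hC : 0 < C) (ht₀ : 0 < t₀)
    (hEdiff : Differentiable ℝ E) (hJdiff : Differentiable ℝ J)
    (hEanti : AntitoneOn E (Set.Ici t₀))
    (hEnonneg : ∀ t ≥ t₀, 0 ≤ E t)
    (hJnonneg : ∀ t ≥ t₀, 0 ≤ J t)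
    (hE0 : E t₀ ≤ E 0) (hE0nonneg : 0 ≤ E 0)
    (hJt₀ : J t₀ ≤ C * E 0)
    (hineq : ∀ t ≥ t₀, deriv J t + ε * E t ≤
      C * (-(deriv E t)) + C * (-(deriv E t)) ^ (2 / (q + 1))) :
    ∃ C' > 0, ∀ τ ≥ t₀,
      (∫ t in t₀..τ, E t ^ ((q + 1) / 2)) ≤ C' * (E 0 + E 0 ^ ((q + 1) / 2)) :=
  stmt18_general E J q ε C t₀ hq hε hC hEdiff hJdiff hEanti hEnonneg hJnonneg hE0 hJt₀ hineq
end
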